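/- arXiv:2211.04678 — 3 statements merged into one kernel-verified Lean document; each statement's English description precedes it below -/
import Mathlib

section
/- Let z_{i,1},...,z_{i,k} be the roots of the derivative of ω(x) = ∏_{j=1}^{k+1}(x − y_{i,j}) where y_{i,1} < ... < y_{i,k+1} are distinct points in an interval V_i of length h_i. Then for u ∈ C^{k+2}(V_i), the derivative of the interpolation error satisfies |(u − I_h u)'(z_{i,j})| ≤ C h_i^{k+1} ‖u‖_{C^{k+2}(V_i)} for each j, with C depending only on k. -/
open Polynomial

lemma rolle_step (f : ℝ → ℝ) (hf : Differentiable ℝ f) :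
    ∀ (n : ℕ) (s : Finset ℝ), s.card ≤ n → (∀ x ∈ s, f x = 0) →
    ∃ t : Finset ℝ, s.card - 1 ≤ t.card ∧ (∀ x ∈ t, deriv f x = 0) ∧
      (∀ x ∈ t, ∃ u ∈ s, ∃ v ∈ s, u < x ∧ x < v) ∧ ∀ x ∈ t, x ∉ s := by
  intro n
  induction n with
  | zero =>
    intro s hs _
    exact ⟨∅, by omega, by simp, by simp, by simp⟩
  | succ n ih =>
    intro s hcard hzero
    by_cases h1 : s.card ≤ 1
    · exact ⟨∅, by omega, by simp, by simp, by simp⟩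
    push_neg at h1
    have hne : s.Nonempty := Finset.card_pos.mp (by omega)
    set x := s.min' hne with hx
    have hxs : x ∈ s := s.min'_mem hne
    set s' := s.erase x with hs'
    have hcard' : s'.card = s.card - 1 := Finset.card_erase_of_mem hxs
    have hne' : s'.Nonempty := Finset.card_pos.mp (by omega)
    set w := s'.min' hne' with hw
    have hws' : w ∈ s' := s'.min'_mem hne'
    have hws : w ∈ s := Finset.mem_of_mem_erase hws'
    have hxw : x < w :=
      lt_of_le_of_ne (s.min'_le w hws) (fun h => (Finset.ne_of_mem_erase hws') h.symm)
    obtain ⟨c, hc, hc0⟩ := exists_deriv_eq_zero hxw hf.continuous.continuousOn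
      (by rw [hzero x hxs, hzero w hws])
    obtain ⟨t', ht'card, ht'zero, ht'btw, ht'not⟩ :=
      ih s' (by omega) (fun q hq => hzero q (Finset.mem_of_mem_erase hq))
    have hbig : ∀ q ∈ t', w < q := by
      intro q hq
      obtain ⟨u, hu, v, hv, h1, h2⟩ := ht'btw q hq
      exact lt_of_le_of_lt (s'.min'_le u hu) h1
    have hct' : c ∉ t' := fun hct => absurd (hbig c hct) (not_lt.mpr hc.2.le)
    refine ⟨insert c t', ?_, ?_, ?_, ?_⟩
    · rw [Finset.card_insert_of_notMem hct']; omega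
    · intro q hq
      rcases Finset.mem_insert.mp hq with rfl | hq
      · exact hc0
      · exact ht'zero q hq
    · intro q hq
      rcases Finset.mem_insert.mp hq with rfl | hq
      · exact ⟨x, hxs, w, hws, hc.1, hc.2⟩
      · obtain ⟨u, hu, v, hv, h1, h2⟩ := ht'btw q hq
        exact ⟨u, Finset.mem_of_mem_erase hu, v, Finset.mem_of_mem_erase hv, h1, h2⟩
    · intro q hq
      rcases Finset.mem_insert.mp hq with hqc | hq
      · subst hqc
        intro hcs
        by_cases hcx : q = x
        · rw [hcx] at hc; exact absurd hc.1 (lt_irrefl _)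
        · have hcs' : q ∈ s' := Finset.mem_erase.mpr ⟨hcx, hcs⟩
          exact absurd (s'.min'_le q hcs') (not_le.mpr hc.2)
      · intro hqs
        have hqx : q ≠ x := by
          have := hbig q hq
          intro h; rw [h] at this; linarith
        exact ht'not q hq (Finset.mem_erase.mpr ⟨hqx, hqs⟩)

lemma rolle_iter : ∀ (n : ℕ) (f : ℝ → ℝ), ContDiff ℝ (n : ℕ) f → ∀ (s : Finset ℝ) (a b : ℝ),
    n + 1 ≤ s.card → (∀ x ∈ s, f x = 0) → ↑s ⊆ Set.Icc a b →
    ∃ ξ ∈ Set.Icc a b, iteratedDeriv n f ξ = 0 := by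
  intro n
  induction n with
  | zero =>
    intro f hf s a b hcard hz hsub
    obtain ⟨x, hx⟩ := Finset.card_pos.mp (Nat.lt_of_lt_of_le Nat.zero_lt_one hcard)
    exact ⟨x, hsub hx, by simpa using hz x hx⟩
  | succ n ih =>
    intro f hf s a b hcard hz hsub
    rw [show ((n+1 : ℕ) : WithTop ℕ∞) = (n : WithTop ℕ∞) + 1 from by push_cast; rfl] at hf
    have hdiff : Differentiable ℝ f := (contDiff_succ_iff_deriv.mp hf).1
    have hderiv : ContDiff ℝ (n : ℕ) (deriv f) := (contDiff_succ_iff_deriv.mp hf).2.2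
    obtain ⟨t, htcard, htz, htbtw, _⟩ := rolle_step f hdiff s.card s le_rfl hz
    have htsub : ↑t ⊆ Set.Icc a b := by
      intro q hq
      obtain ⟨u, hu, v, hv, h1, h2⟩ := htbtw q hq
      exact ⟨(hsub hu).1.trans h1.le, h2.le.trans (hsub hv).2⟩
    obtain ⟨ξ, hξ, h0⟩ := ih (deriv f) hderiv t a b (by omega) htz htsub
    exact ⟨ξ, hξ, by rw [iteratedDeriv_succ']; exact h0⟩

lemma polyEval_contDiff (p : ℝ[X]) (n : WithTop ℕ∞) : ContDiff ℝ n fun x : ℝ => p.eval x := by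
  induction p using Polynomial.induction_on' with
  | add p q hp hq => simpa using hp.add hq
  | monomial m a =>
    simpa [Polynomial.eval_monomial] using (contDiff_const (c := a)).mul (contDiff_id.pow m)

lemma iteratedDeriv_polyEval (p : ℝ[X]) (n : ℕ) :
    iteratedDeriv n (fun x : ℝ => p.eval x) = fun x => (Polynomial.derivative^[n] p).eval x := by
  induction n with
  | zero => simp
  | succ n ih =>
    rw [iteratedDeriv_succ, ih, Function.iterate_succ_apply']
    funext x
    exact Polynomial.deriv (p := Polynomial.derivative^[n] p)

lemma iterate_derivative_add' (n : ℕ) (p q : ℝ[X]) :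
    Polynomial.derivative^[n] (p + q)
      = Polynomial.derivative^[n] p + Polynomial.derivative^[n] q := by
  induction n with
  | zero => simp
  | succ n ih => rw [Function.iterate_succ_apply', Function.iterate_succ_apply',
      Function.iterate_succ_apply', ih, Polynomial.derivative_add]

theorem main_test (k : ℕ) :
      ∀ a b : ℝ, a < b → ∀ y : Fin (k+1) → ℝ, Function.Injective y →
        (∀ j, y j ∈ Set.Icc a b) →
        ∀ (u : ℝ → ℝ) (M : ℝ), ContDiff ℝ (k+2) u →
          (∀ m ≤ k + 2, ∀ t ∈ Set.Icc a b, |iteratedDeriv m u t| ≤ M) →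
          ∀ z ∈ Set.Icc a b,
            deriv (fun t => ∏ j, (t - y j)) z = 0 →
            ∃ β : ℝ, |β| ≤ M ∧
            deriv (fun t =>
                u t - (Lagrange.interpolate Finset.univ y (fun j => u (y j))).eval t) z
              = β * (∏ j, (z - y j)) := by
  intro a b hab y hinj hy u M hu hbound z hz hω
  have hu' : ContDiff ℝ ((k+2 : ℕ) : WithTop ℕ∞) u := by exact_mod_cast hu
  set p := Lagrange.interpolate Finset.univ y (fun j => u (y j)) with hp
  set W : ℝ[X] := ∏ j, (Polynomial.X - Polynomial.C (y j)) with hW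
  have hWfun : (fun t : ℝ => ∏ j, (t - y j)) = fun t => W.eval t := by
    funext t; simp [hW, Polynomial.eval_prod]
  have hWevalz : W.eval z = ∏ j, (z - y j) := by simp [hW, Polynomial.eval_prod]
  have hW'z : W.derivative.eval z = 0 := by
    rw [hWfun] at hω
    rw [← Polynomial.deriv (p := W) (x := z)]
    exact hω
  have hWz : W.eval z ≠ 0 := by
    intro h
    rw [hWevalz] at h
    obtain ⟨j, -, hj⟩ := Finset.prod_eq_zero_iff.mp h
    have hzj : z = y j := by linarith [sub_eq_zero.mp hj]
    have hWsplit : W = (Polynomial.X - Polynomial.C (y j)) *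
        ∏ i ∈ Finset.univ.erase j, (Polynomial.X - Polynomial.C (y i)) :=
      (Finset.mul_prod_erase _ _ (Finset.mem_univ j)).symm
    have heval : W.derivative.eval (y j) = ∏ i ∈ Finset.univ.erase j, (y j - y i) := by
      rw [hWsplit, Polynomial.derivative_mul, Polynomial.derivative_X_sub_C]
      simp [Polynomial.eval_prod]
    have hne : W.derivative.eval (y j) ≠ 0 := by
      rw [heval]
      exact Finset.prod_ne_zero_iff.mpr fun i hi =>
        sub_ne_zero.mpr fun h' => (Finset.ne_of_mem_erase hi) (hinj h').symm
    rw [hzj] at hW'z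
    exact hne hW'z
  have hfac : ∀ j, z - y j ≠ 0 := by
    intro j h
    exact hWz (by rw [hWevalz]; exact Finset.prod_eq_zero (Finset.mem_univ j) h)
  have hpnode : ∀ j, p.eval (y j) = u (y j) := fun j =>
    Lagrange.eval_interpolate_at_node _ hinj.injOn (Finset.mem_univ j)
  have hWnode : ∀ j, W.eval (y j) = 0 := by
    intro j
    rw [hW, Polynomial.eval_prod]
    exact Finset.prod_eq_zero (Finset.mem_univ j) (by simp)
  set α : ℝ := (u z - p.eval z) / W.eval z with hα
  set β : ℝ := (deriv u z - p.derivative.eval z) / W.eval z with hβ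
  set S : ℝ[X] := (Polynomial.X - Polynomial.C z) * W with hS
  set Q : ℝ[X] := p + Polynomial.C α * W + Polynomial.C β * S with hQ
  set E : ℝ → ℝ := fun t => u t - Q.eval t with hE
  have hQc : ContDiff ℝ ((k+2 : ℕ) : WithTop ℕ∞) fun t : ℝ => Q.eval t := polyEval_contDiff Q _
  have hEc : ContDiff ℝ ((k+2 : ℕ) : WithTop ℕ∞) E := hu'.sub hQc
  have hudiff : Differentiable ℝ u :=
    hu'.differentiable (by simp)
  -- zeros of E
  have hEy : ∀ j, E (y j) = 0 := by
    intro j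
    simp only [hE, hQ, hS, Polynomial.eval_add, Polynomial.eval_mul, Polynomial.eval_C,
      hWnode j, hpnode j, mul_zero, add_zero]
    ring
  have hEz : E z = 0 := by
    have hQz : Q.eval z = p.eval z + α * W.eval z := by
      simp [hQ, hS]
    rw [hE]
    simp only [hQz, hα]
    field_simp
    ring
  have hderivE : ∀ t, deriv E t = deriv u t - Q.derivative.eval t := by
    intro t
    rw [hE, deriv_fun_sub (hudiff t) ((Polynomial.differentiable Q) t),
      Polynomial.deriv (p := Q)]
  have hQ' : Polynomial.derivative Q =
      Polynomial.derivative p + Polynomial.C α * Polynomial.derivative W +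
        Polynomial.C β * (W + (Polynomial.X - Polynomial.C z) * Polynomial.derivative W) := by
    rw [hQ, hS]
    simp only [Polynomial.derivative_add, Polynomial.derivative_mul, Polynomial.derivative_C,
      Polynomial.derivative_X_sub_C]
    ring
  have hE'z : deriv E z = 0 := by
    rw [hderivE, hQ']
    have hβW : β * W.eval z = deriv u z - p.derivative.eval z := by
      rw [hβ]; field_simp
    simp only [Polynomial.eval_add, Polynomial.eval_mul, Polynomial.eval_C, hW'z,
      Polynomial.eval_sub, Polynomial.eval_X, sub_self, mul_zero, add_zero, zero_mul]
    linarith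
  -- the polynomial computation
  have hWmonic : W.Monic := Polynomial.monic_prod_of_monic _ _ fun i _ => Polynomial.monic_X_sub_C _
  have hWdeg : W.natDegree = k + 1 := by
    rw [hW, Polynomial.natDegree_prod _ _ fun i _ => Polynomial.X_sub_C_ne_zero _]
    simp
  have hSmonic : S.Monic := (Polynomial.monic_X_sub_C z).mul hWmonic
  have hSdeg : S.natDegree = k + 2 := by
    rw [hS, (Polynomial.monic_X_sub_C z).natDegree_mul hWmonic, Polynomial.natDegree_X_sub_C,
      hWdeg]
    omega
  have hpdeg : p.natDegree ≤ k + 1 := by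
    apply Polynomial.natDegree_le_iff_degree_le.mpr
    apply le_of_lt
    have := Lagrange.degree_interpolate_lt (s := Finset.univ) (v := y)
      (r := fun j => u (y j)) hinj.injOn
    simpa [hp] using this
  have hRdeg : (p + Polynomial.C α * W).natDegree ≤ k + 1 := by
    apply (Polynomial.natDegree_add_le _ _).trans
    apply max_le hpdeg
    apply (Polynomial.natDegree_mul_le).trans
    simp [hWdeg]
  have hR0 : Polynomial.derivative^[k+2] (p + Polynomial.C α * W) = 0 :=
    Polynomial.iterate_derivative_eq_zero (by omega)
  have hSit : Polynomial.derivative^[k+2] S = Polynomial.C ((Nat.factorial (k+2) : ℕ) : ℝ) := by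
    have hdeg0 : (Polynomial.derivative^[k+2] S).natDegree = 0 := by
      have := Polynomial.natDegree_iterate_derivative S (k+2)
      omega
    have hCform := Polynomial.eq_C_of_natDegree_eq_zero hdeg0
    rw [hCform, Polynomial.coeff_iterate_derivative]
    congr 1
    have : S.coeff (0 + (k+2)) = 1 := by
      rw [zero_add, ← hSdeg]; exact hSmonic.coeff_natDegree
    rw [this, zero_add, Nat.descFactorial_self, nsmul_eq_mul, mul_one]
  -- assemble Q iterated derivative
  have hQiter : ∀ x : ℝ, (Polynomial.derivative^[k+2] Q).eval x = β * ((Nat.factorial (k+2) : ℕ) : ℝ) := by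
    intro x
    have : Q = (p + Polynomial.C α * W) + Polynomial.C β * S := by rw [hQ]
    rw [this, iterate_derivative_add' (k+2), hR0, Polynomial.iterate_derivative_C_mul, hSit]
    simp
  -- Rolle argument
  have hycard : (Finset.image y Finset.univ).card = k + 1 := by
    rw [Finset.card_image_of_injective _ hinj, Finset.card_univ, Fintype.card_fin]
  have hzny : z ∉ Finset.image y Finset.univ := by
    simp only [Finset.mem_image]
    rintro ⟨j, -, hj⟩
    exact hfac j (by rw [hj]; ring)
  set s₁ : Finset ℝ := insert z (Finset.image y Finset.univ) with hs₁
  have hs₁card : s₁.card = k + 2 := by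
    rw [hs₁, Finset.card_insert_of_notMem hzny, hycard]
  have hEdiff : Differentiable ℝ E := hudiff.sub (Polynomial.differentiable Q)
  have hs₁zero : ∀ x ∈ s₁, E x = 0 := by
    intro x hx
    rcases Finset.mem_insert.mp hx with rfl | hx
    · exact hEz
    · obtain ⟨j, -, rfl⟩ := Finset.mem_image.mp hx
      exact hEy j
  obtain ⟨t, htcard, htz, htbtw, htnot⟩ := rolle_step E hEdiff s₁.card s₁ le_rfl hs₁zero
  have hznt : z ∉ t := fun h => htnot z h (Finset.mem_insert_self _ _)
  set s₂ := insert z t with hs₂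
  have hs₂card : k + 2 ≤ s₂.card := by
    rw [hs₂, Finset.card_insert_of_notMem hznt]; omega
  have hs₁sub : ∀ q ∈ s₁, q ∈ Set.Icc a b := by
    intro q hq
    rcases Finset.mem_insert.mp hq with rfl | hq
    · exact hz
    · obtain ⟨j, -, rfl⟩ := Finset.mem_image.mp hq
      exact hy j
  have hs₂sub : ↑s₂ ⊆ Set.Icc a b := by
    intro q hq
    rcases Finset.mem_insert.mp (Finset.mem_coe.mp hq) with rfl | hq'
    · exact hz
    · obtain ⟨u', hu', v, hv, h1, h2⟩ := htbtw q hq'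
      exact ⟨(hs₁sub u' hu').1.trans h1.le, h2.le.trans (hs₁sub v hv).2⟩
  have hs₂zero : ∀ x ∈ s₂, deriv E x = 0 := by
    intro x hx
    rcases Finset.mem_insert.mp hx with rfl | hx
    · exact hE'z
    · exact htz x hx
  have hE'c : ContDiff ℝ ((k+1 : ℕ) : WithTop ℕ∞) (deriv E) := by
    rw [show ((k+2 : ℕ) : WithTop ℕ∞) = ((k+1 : ℕ) : WithTop ℕ∞) + 1 by push_cast; ring] at hEc
    exact (contDiff_succ_iff_deriv.mp hEc).2.2
  obtain ⟨ξ, hξ, hξ0⟩ := rolle_iter (k+1) (deriv E) hE'c s₂ a b (by omega) hs₂zero hs₂sub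
  have hEk2 : iteratedDeriv (k+2) E ξ = 0 := by rw [iteratedDeriv_succ']; exact hξ0
  -- split the iterated derivative
  have hsplit : iteratedDeriv (k+2) E ξ =
      iteratedDeriv (k+2) u ξ - iteratedDeriv (k+2) (fun t => Q.eval t) ξ := by
    have h1 : E = u - fun t => Q.eval t := rfl
    rw [h1, ← iteratedDerivWithin_univ, ← iteratedDerivWithin_univ, ← iteratedDerivWithin_univ]
    exact iteratedDerivWithin_sub (Set.mem_univ ξ) uniqueDiffOn_univ
      hu'.contDiffWithinAt hQc.contDiffWithinAt
  have hkey : iteratedDeriv (k+2) u ξ = β * ((Nat.factorial (k+2) : ℕ) : ℝ) := by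
    have h2 : iteratedDeriv (k+2) (fun t => Q.eval t) ξ = β * ((Nat.factorial (k+2) : ℕ) : ℝ) := by
      rw [iteratedDeriv_polyEval]
      exact hQiter ξ
    rw [hEk2, h2] at hsplit
    linarith
  refine ⟨β, ?_, ?_⟩
  · have hub : |iteratedDeriv (k+2) u ξ| ≤ M := hbound (k+2) le_rfl ξ hξ
    rw [hkey, abs_mul, abs_of_nonneg (by positivity : (0:ℝ) ≤ ((Nat.factorial (k+2) : ℕ) : ℝ))] at hub
    have hfac1 : (1 : ℝ) ≤ ((Nat.factorial (k+2) : ℕ) : ℝ) := by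
      exact_mod_cast Nat.one_le_iff_ne_zero.mpr (Nat.factorial_ne_zero _)
    nlinarith [abs_nonneg β]
  · have hgz : deriv (fun t => u t - p.eval t) z = deriv u z - p.derivative.eval z := by
      rw [deriv_fun_sub (hudiff z) ((Polynomial.differentiable p) z), Polynomial.deriv (p := p)]
    rw [hgz, ← hWevalz, hβ]
    field_simp


/-- Let `z` be a root (in `V = [a,b]`, of length `h`) of the derivative of
`ω(x) = ∏_{j=1}^{k+1}(x − y_j)`, where `y_1 < ... < y_{k+1}` are distinct points in `V`.
Then for `u ∈ C^{k+2}(V)` the derivative of the degree-`k` Lagrange interpolation error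
satisfies `|(u − I_h u)'(z)| ≤ C h^{k+1} ‖u‖_{C^{k+2}(V)}` with `C` depending only on
`k`. -/
theorem interp_error_deriv_superconvergence (k : ℕ) :
    ∃ C : ℝ, 0 < C ∧
      ∀ a b : ℝ, a < b → ∀ y : Fin (k+1) → ℝ, Function.Injective y →
        (∀ j, y j ∈ Set.Icc a b) →
        ∀ (u : ℝ → ℝ) (M : ℝ), ContDiff ℝ (k+2) u →
          (∀ m ≤ k + 2, ∀ t ∈ Set.Icc a b, |iteratedDeriv m u t| ≤ M) →
          ∀ z ∈ Set.Icc a b,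
            deriv (fun t => ∏ j, (t - y j)) z = 0 →
            |deriv (fun t =>
                u t - (Lagrange.interpolate Finset.univ y (fun j => u (y j))).eval t) z|
              ≤ C * (b - a)^(k+1) * M := by
  refine ⟨1, one_pos, ?_⟩
  intro a b hab y hinj hy u M hu hbound z hz hω
  obtain ⟨β, hβM, hβeq⟩ := main_test k a b hab y hinj hy u M hu hbound z hz hω
  have hM0 : 0 ≤ M := le_trans (abs_nonneg _) (hbound 0 (by omega) a ⟨le_refl a, hab.le⟩)
  rw [hβeq, abs_mul]
  have hprod : |∏ j, (z - y j)| ≤ (b - a)^(k+1) := by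
    rw [Finset.abs_prod]
    calc ∏ j, |z - y j| ≤ ∏ _j : Fin (k+1), (b - a) :=
          Finset.prod_le_prod (fun i _ => abs_nonneg _) (fun i _ => by
            rw [abs_le]
            constructor
            · linarith [hz.1, hz.2, (hy i).1, (hy i).2]
            · linarith [hz.1, hz.2, (hy i).1, (hy i).2])
      _ = (b - a)^(k+1) := by
          rw [Finset.prod_const, Finset.card_univ, Fintype.card_fin]
  calc |β| * |∏ j, (z - y j)| ≤ M * (b - a)^(k+1) :=
        mul_le_mul hβM hprod (abs_nonneg _) hM0
    _ = 1 * (b - a)^(k+1) * M := by ring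
end

section
/- The transformation T from V_h (piecewise polynomials of degree ≤ k on a mesh) to the space of piecewise constants on the control-volume sub-partition, defined by Tw = Σ_i Σ_{j=0}^k w*_{i,j} χ_{[x_{i,j},x_{i,j+1}]} with w*_{i,0} = w(x_{i,0}^+) + A_{i,0} w'(x_{i,0}) and w*_{i,j} = w*_{i,j-1} + A_{i,j} w'(x_{i,j}), is a linear bijection, and there exists a constant C (independent of the mesh size, for shape-regular meshes) such that ‖Tw‖_{L²} ≤ C‖w‖_{L²} for all w ∈ V_h. -/
open Polynomial

/-- On element `i` of the mesh `X`, with reference subdivision abscissae `s` and reference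
weights `Aref` (scaled by the half-length of the element), the value `w*_{i,j}` of the
transformation `T`, i.e. `w*_{i,j} = w(x_{i,0}⁺) + Σ_{l ≤ j} A_{i,l} w'(x_{i,l})`, which is
the closed form of the recurrence `w*_{i,0} = w(x_{i,0}⁺) + A_{i,0} w'(x_{i,0})`,
`w*_{i,j} = w*_{i,j-1} + A_{i,j} w'(x_{i,j})`. -/
noncomputable def wstar (k N : ℕ) (X : Fin (N+1) → ℝ) (s : Fin (k+2) → ℝ)
    (Aref : Fin (k+2) → ℝ) (w : Fin N → Polynomial ℝ) (i : Fin N) (j : Fin (k+1)) : ℝ :=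
  let a := X i.castSucc
  let b := X i.succ
  let xi : Fin (k+2) → ℝ := fun l => (b - a) / 2 * s l + (a + b) / 2
  let Ai : Fin (k+2) → ℝ := fun l => (b - a) / 2 * Aref l
  (w i).eval (xi 0) +
    ∑ l ∈ Finset.univ.filter (fun l : Fin (k+2) => (l : ℕ) ≤ (j : ℕ)),
      Ai l * ((Polynomial.derivative (w i)).eval (xi l))

namespace T14aux

lemma natDegree_le_of_mem {k : ℕ} {p : ℝ[X]} (hp : p ∈ Polynomial.degreeLT ℝ (k+1)) :
    p.natDegree ≤ k := by
  rcases eq_or_ne p 0 with rfl | h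
  · simp
  · rw [Polynomial.mem_degreeLT] at hp
    exact Nat.lt_succ_iff.mp ((Polynomial.natDegree_lt_iff_degree_lt h).mpr hp)

lemma mem_of_natDegree_le {k : ℕ} {p : ℝ[X]} (hp : p.natDegree ≤ k) :
    p ∈ Polynomial.degreeLT ℝ (k+1) := by
  rw [Polynomial.mem_degreeLT]
  calc p.degree ≤ (p.natDegree : WithBot ℕ) := Polynomial.degree_le_natDegree
    _ < ((k+1 : ℕ) : WithBot ℕ) := by exact_mod_cast Nat.lt_succ_of_le hp

/-- The reference linear functional giving `w*_{·,j}` on the reference element. -/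
noncomputable def Lref (k : ℕ) (s Aref : Fin (k+2) → ℝ) (j : Fin (k+1)) :
    Polynomial.degreeLT ℝ (k+1) →ₗ[ℝ] ℝ where
  toFun p := (p : ℝ[X]).eval (s 0) +
    ∑ l ∈ Finset.univ.filter (fun l : Fin (k+2) => (l : ℕ) ≤ (j : ℕ)),
      Aref l * ((Polynomial.derivative (p : ℝ[X])).eval (s l))
  map_add' p q := by
    simp [Finset.sum_add_distrib, mul_add]
    ring
  map_smul' c p := by
    show (((c • p : Polynomial.degreeLT ℝ (k+1)) : ℝ[X])).eval (s 0) +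
      ∑ l ∈ Finset.univ.filter (fun l : Fin (k+2) => (l : ℕ) ≤ (j : ℕ)),
        Aref l * ((Polynomial.derivative ((c • p : Polynomial.degreeLT ℝ (k+1)) : ℝ[X])).eval (s l))
      = c * ((p : ℝ[X]).eval (s 0) +
      ∑ l ∈ Finset.univ.filter (fun l : Fin (k+2) => (l : ℕ) ≤ (j : ℕ)),
        Aref l * ((Polynomial.derivative (p : ℝ[X])).eval (s l)))
    have hcp : ((c • p : Polynomial.degreeLT ℝ (k+1)) : ℝ[X]) = C c * (p : ℝ[X]) := by
      simp [Polynomial.smul_eq_C_mul]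
    rw [hcp]
    simp only [derivative_mul, derivative_C, zero_mul, zero_add, eval_mul, eval_C, eval_add,
      Finset.mul_sum, mul_add]
    congr 1
    exact Finset.sum_congr rfl (fun l _ => by ring)

/-- Composition with the affine map `x ↦ c x + d`, as a linear endomorphism of `degreeLT`. -/
noncomputable def affComp (k : ℕ) (c d : ℝ) :
    Polynomial.degreeLT ℝ (k+1) →ₗ[ℝ] Polynomial.degreeLT ℝ (k+1) where
  toFun p := ⟨(p : ℝ[X]).comp (C c * X + C d), by
    refine mem_of_natDegree_le ?_
    calc ((p : ℝ[X]).comp (C c * X + C d)).natDegree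
        ≤ (p : ℝ[X]).natDegree * (C c * X + C d).natDegree := natDegree_comp_le
      _ ≤ (p : ℝ[X]).natDegree * 1 :=
          Nat.mul_le_mul_left _ natDegree_linear_le
      _ ≤ k := by simpa using natDegree_le_of_mem p.2⟩
  map_add' p q := by ext; simp [add_comp]
  map_smul' c p := by ext; simp [smul_comp]

lemma affComp_affComp {k : ℕ} {c : ℝ} (hc : c ≠ 0) (d : ℝ)
    (p : Polynomial.degreeLT ℝ (k+1)) :
    affComp k c⁻¹ (-(d/c)) (affComp k c d p) = p := by
  apply Subtype.ext
  show ((p : ℝ[X]).comp (C c * X + C d)).comp (C c⁻¹ * X + C (-(d/c))) = (p : ℝ[X])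
  rw [Polynomial.comp_assoc]
  have h2 : (C c * X + C d).comp (C c⁻¹ * X + C (-(d/c))) = X := by
    rw [add_comp, mul_comp, C_comp, C_comp, X_comp, mul_add, ← mul_assoc, ← C_mul,
      mul_inv_cancel₀ hc, ← C_mul, add_assoc, ← C_add]
    have : c * -(d/c) + d = 0 := by field_simp; ring
    rw [this, C_0, add_zero, C_1, one_mul]
  rw [h2, comp_X]

lemma polyIntegrable (p : ℝ[X]) (a b : ℝ) :
    IntervalIntegrable (fun x => p.eval x) MeasureTheory.volume a b :=
  (Polynomial.continuous p).intervalIntegrable a b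

lemma polyMulIntegrable (p q : ℝ[X]) (a b : ℝ) :
    IntervalIntegrable (fun x => p.eval x * q.eval x) MeasureTheory.volume a b :=
  ((Polynomial.continuous p).mul (Polynomial.continuous q)).intervalIntegrable a b

/-- The `L²(-1,1)` inner product core on `degreeLT ℝ (k+1)`. -/
noncomputable def l2core (k : ℕ) : InnerProductSpace.Core ℝ (Polynomial.degreeLT ℝ (k+1)) where
  inner p q := ∫ x in (-1:ℝ)..1, (p : ℝ[X]).eval x * (q : ℝ[X]).eval x
  conj_inner_symm p q := by
    simp only [starRingEnd_apply, star_trivial]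
    exact intervalIntegral.integral_congr (fun x _ => mul_comm _ _)
  re_inner_nonneg p := by
    simpa using intervalIntegral.integral_nonneg (by norm_num)
      (fun x _ => mul_self_nonneg ((p : ℝ[X]).eval x))
  add_left p q r := by
    have : ∀ x : ℝ, ((p + q : Polynomial.degreeLT ℝ (k+1)) : ℝ[X]).eval x * (r : ℝ[X]).eval x
        = (p : ℝ[X]).eval x * (r : ℝ[X]).eval x + (q : ℝ[X]).eval x * (r : ℝ[X]).eval x := by
      intro x; simp [add_mul]
    simp only [this]
    exact intervalIntegral.integral_add (polyMulIntegrable _ _ _ _) (polyMulIntegrable _ _ _ _)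
  smul_left p q c := by
    have : ∀ x : ℝ, ((c • p : Polynomial.degreeLT ℝ (k+1)) : ℝ[X]).eval x * (q : ℝ[X]).eval x
        = c * ((p : ℝ[X]).eval x * (q : ℝ[X]).eval x) := by
      intro x; simp [Polynomial.smul_eq_C_mul]; ring
    simp only [this, starRingEnd_apply, star_trivial]
    exact intervalIntegral.integral_const_mul c _
  definite p hp := by
    by_contra hne
    have hpoly : (p : ℝ[X]) ≠ 0 := fun h => hne (Subtype.ext h)
    set f : ℝ → ℝ := fun x => (p : ℝ[X]).eval x * (p : ℝ[X]).eval x with hf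
    have hnn : (0:ℝ → ℝ) ≤ᵐ[MeasureTheory.volume] f :=
      Filter.Eventually.of_forall (fun x => mul_self_nonneg _)
    have hpos : 0 < ∫ x in (-1:ℝ)..1, f x := by
      rw [intervalIntegral.integral_pos_iff_support_of_nonneg_ae hnn
        (polyMulIntegrable _ _ _ _)]
      refine ⟨by norm_num, ?_⟩
      have hsub : Set.Ioc (-1:ℝ) 1 \ {x | (p : ℝ[X]).IsRoot x}
          ⊆ Function.support f ∩ Set.Ioc (-1:ℝ) 1 := by
        rintro x ⟨hx1, hx2⟩
        exact ⟨mul_ne_zero hx2 hx2, hx1⟩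
      have hroots : MeasureTheory.volume {x : ℝ | (p : ℝ[X]).IsRoot x} = 0 :=
        Set.Finite.measure_zero (Polynomial.finite_setOf_isRoot hpoly) _
      calc (0:ENNReal) < MeasureTheory.volume (Set.Ioc (-1:ℝ) 1) := by simp
        _ = MeasureTheory.volume (Set.Ioc (-1:ℝ) 1 \ {x | (p : ℝ[X]).IsRoot x}) :=
            (MeasureTheory.measure_diff_null hroots).symm
        _ ≤ MeasureTheory.volume (Function.support f ∩ Set.Ioc (-1:ℝ) 1) :=
            MeasureTheory.measure_mono hsub
    have : (0:ℝ) < 0 := by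
      calc (0:ℝ) < ∫ x in (-1:ℝ)..1, f x := hpos
        _ = 0 := hp
    exact lt_irrefl 0 this

lemma Lref_apply (k : ℕ) (s Aref : Fin (k+2) → ℝ) (j : Fin (k+1))
    (p : Polynomial.degreeLT ℝ (k+1)) :
    Lref k s Aref j p = (p : ℝ[X]).eval (s 0) +
      ∑ l ∈ Finset.univ.filter (fun l : Fin (k+2) => (l : ℕ) ≤ (j : ℕ)),
        Aref l * ((Polynomial.derivative (p : ℝ[X])).eval (s l)) := rfl

lemma affComp_apply (k : ℕ) (c d : ℝ) (p : Polynomial.degreeLT ℝ (k+1)) :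
    ((affComp k c d p : Polynomial.degreeLT ℝ (k+1)) : ℝ[X])
      = (p : ℝ[X]).comp (C c * X + C d) := rfl

lemma sum_filter_succ {k : ℕ} (f : Fin (k+2) → ℝ) (m : ℕ) (hm : m + 1 ≤ k + 1) :
    ∑ l ∈ Finset.univ.filter (fun l : Fin (k+2) => (l:ℕ) ≤ m + 1), f l
    = (∑ l ∈ Finset.univ.filter (fun l : Fin (k+2) => (l:ℕ) ≤ m), f l)
      + f ⟨m+1, by omega⟩ := by
  have hins : Finset.univ.filter (fun l : Fin (k+2) => (l:ℕ) ≤ m+1)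
      = insert (⟨m+1, by omega⟩ : Fin (k+2))
          (Finset.univ.filter (fun l : Fin (k+2) => (l:ℕ) ≤ m)) := by
    ext l
    simp only [Finset.mem_filter, Finset.mem_univ, true_and, Finset.mem_insert, Fin.ext_iff]
    omega
  rw [hins, Finset.sum_insert (by simp)]
  ring

/-- Injectivity of the family of reference functionals. -/
lemma Lref_injective {k : ℕ} (hk : 1 ≤ k) {s Aref : Fin (k+2) → ℝ} (hs : StrictMono s)
    (hAint : ∀ l : Fin (k+2), 1 ≤ (l : ℕ) → (l : ℕ) ≤ k → Aref l ≠ 0)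
    (p : Polynomial.degreeLT ℝ (k+1)) (hp : ∀ j : Fin (k+1), Lref k s Aref j p = 0) :
    p = 0 := by
  have hder : ∀ l : Fin (k+2), 1 ≤ (l:ℕ) → (l:ℕ) ≤ k →
      (Polynomial.derivative (p : ℝ[X])).eval (s l) = 0 := by
    intro l hl1 hl2
    obtain ⟨m, hm⟩ : ∃ m : ℕ, (l:ℕ) = m + 1 := ⟨(l:ℕ) - 1, by omega⟩
    have h1 := hp ⟨m+1, by omega⟩
    have h0 := hp ⟨m, by omega⟩
    rw [Lref_apply] at h1 h0
    simp only at h1 h0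
    rw [sum_filter_succ (fun l => Aref l * ((Polynomial.derivative (p : ℝ[X])).eval (s l)))
      m (by omega)] at h1
    have hl : (⟨m+1, by omega⟩ : Fin (k+2)) = l := by
      apply Fin.ext; simp [hm]
    rw [hl] at h1
    have : Aref l * (Polynomial.derivative (p : ℝ[X])).eval (s l) = 0 := by
      linarith [h1, h0]
    exact (mul_eq_zero.mp this).resolve_left (hAint l hl1 hl2)
  have hderiv0 : Polynomial.derivative (p : ℝ[X]) = 0 := by
    apply Polynomial.eq_zero_of_natDegree_lt_card_of_eval_eq_zero _
      (f := fun i : Fin k => s ⟨(i:ℕ)+1, by omega⟩)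
    · intro i i' hii
      have := hs.injective hii
      apply Fin.ext
      simpa [Fin.ext_iff] using this
    · intro i
      exact hder ⟨(i:ℕ)+1, by omega⟩ (by simp) (by simp [Nat.succ_le_iff, i.isLt])
    · have h1 : (Polynomial.derivative (p : ℝ[X])).natDegree ≤ k - 1 := by
        calc (Polynomial.derivative (p : ℝ[X])).natDegree ≤ (p : ℝ[X]).natDegree - 1 :=
            Polynomial.natDegree_derivative_le _
          _ ≤ k - 1 := by have := natDegree_le_of_mem p.2; omega
      simpa using lt_of_le_of_lt h1 (by omega)
  have hC : (p : ℝ[X]) = C ((p : ℝ[X]).coeff 0) := Polynomial.eq_C_of_derivative_eq_zero hderiv0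
  have h0 := hp 0
  rw [Lref_apply, hderiv0] at h0
  simp only [Polynomial.eval_zero, mul_zero, Finset.sum_const_zero, add_zero] at h0
  apply Subtype.ext
  rw [hC] at h0 ⊢
  rw [Polynomial.eval_C] at h0
  simp [h0]

lemma finrank_degreeLT (k : ℕ) :
    Module.finrank ℝ (Polynomial.degreeLT ℝ (k+1)) = k + 1 := by
  rw [LinearEquiv.finrank_eq (Polynomial.degreeLTEquiv ℝ (k+1))]
  simp

instance (k : ℕ) : FiniteDimensional ℝ (Polynomial.degreeLT ℝ (k+1)) :=
  (Polynomial.degreeLTEquiv ℝ (k+1)).symm.finiteDimensional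

/-- The full per-element linear map. -/
noncomputable def Melt (k : ℕ) (s Aref : Fin (k+2) → ℝ) (c d : ℝ) :
    Polynomial.degreeLT ℝ (k+1) →ₗ[ℝ] (Fin (k+1) → ℝ) :=
  (LinearMap.pi (fun j => Lref k s Aref j)).comp (affComp k c d)

lemma Melt_bijective {k : ℕ} (hk : 1 ≤ k) {s Aref : Fin (k+2) → ℝ} (hs : StrictMono s)
    (hAint : ∀ l : Fin (k+2), 1 ≤ (l : ℕ) → (l : ℕ) ≤ k → Aref l ≠ 0)
    {c : ℝ} (hc : c ≠ 0) (d : ℝ) :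
    Function.Bijective (Melt k s Aref c d) := by
  have hinj : Function.Injective (Melt k s Aref c d) := by
    intro p q hpq
    have h1 : affComp k c d p = affComp k c d q := by
      have : affComp k c d p - affComp k c d q = 0 := by
        apply Lref_injective hk hs hAint
        intro j
        have := congrFun hpq j
        simp only [Melt, LinearMap.comp_apply, LinearMap.pi_apply] at this
        simp [map_sub, this]
      exact sub_eq_zero.mp this
    have := congrArg (affComp k c⁻¹ (-(d/c))) h1
    rwa [affComp_affComp hc, affComp_affComp hc] at this
  refine ⟨hinj, ?_⟩
  rw [← LinearMap.injective_iff_surjective_of_finrank_eq_finrank (by simp [finrank_degreeLT])]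
  exact hinj

/-- Mesh-uniform reference bound: the discrete squared norm of the transform is controlled
by the `L²(-1,1)` norm, with a constant depending only on `k`, `s`, `Aref`. -/
lemma ref_bound (k : ℕ) (s Aref : Fin (k+2) → ℝ) (hs : StrictMono s) :
    ∃ C : ℝ, 0 < C ∧ ∀ p : Polynomial.degreeLT ℝ (k+1),
      ∑ j : Fin (k+1), (s j.succ - s j.castSucc) * (Lref k s Aref j p)^2
        ≤ C * ∫ x in (-1:ℝ)..1, ((p : ℝ[X]).eval x)^2 := by
  letI : NormedAddCommGroup (Polynomial.degreeLT ℝ (k+1)) := (l2core k).toNormedAddCommGroup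
  letI : InnerProductSpace ℝ (Polynomial.degreeLT ℝ (k+1)) := InnerProductSpace.ofCore (l2core k).toCore
  have hnorm : ∀ p : Polynomial.degreeLT ℝ (k+1),
      ‖p‖^2 = ∫ x in (-1:ℝ)..1, ((p : ℝ[X]).eval x)^2 := by
    intro p
    have h1 : (inner ℝ p p : ℝ) = ‖p‖^2 := real_inner_self_eq_norm_sq p
    have h2 : (inner ℝ p p : ℝ) = ∫ x in (-1:ℝ)..1, (p : ℝ[X]).eval x * (p : ℝ[X]).eval x := rfl
    rw [← h1, h2]
    exact intervalIntegral.integral_congr (fun x _ => (sq ((p:ℝ[X]).eval x)).symm)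
  set Lc : Fin (k+1) → (Polynomial.degreeLT ℝ (k+1)) →L[ℝ] ℝ :=
    fun j => LinearMap.toContinuousLinearMap (Lref k s Aref j) with hLc
  refine ⟨1 + ∑ j : Fin (k+1), (s j.succ - s j.castSucc) * ‖Lc j‖^2, ?_, ?_⟩
  · have : (0:ℝ) ≤ ∑ j : Fin (k+1), (s j.succ - s j.castSucc) * ‖Lc j‖^2 :=
      Finset.sum_nonneg fun j _ => mul_nonneg
        (by have := hs ((Fin.castSucc_lt_succ (i := j))); linarith) (sq_nonneg _)
    linarith
  · intro p
    have hint : (0:ℝ) ≤ ∫ x in (-1:ℝ)..1, ((p : ℝ[X]).eval x)^2 :=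
      intervalIntegral.integral_nonneg (by norm_num) (fun x _ => sq_nonneg _)
    have key : ∑ j : Fin (k+1), (s j.succ - s j.castSucc) * (Lref k s Aref j p)^2
        ≤ (∑ j : Fin (k+1), (s j.succ - s j.castSucc) * ‖Lc j‖^2) * ‖p‖^2 := by
      rw [Finset.sum_mul]
      refine Finset.sum_le_sum fun j _ => ?_
      have hdj : (0:ℝ) ≤ s j.succ - s j.castSucc := by
        have := hs ((Fin.castSucc_lt_succ (i := j))); linarith
      have hL : (Lref k s Aref j p)^2 ≤ ‖Lc j‖^2 * ‖p‖^2 := by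
        have h1 : |Lref k s Aref j p| ≤ ‖Lc j‖ * ‖p‖ := by
          have := (Lc j).le_opNorm p
          simpa [hLc, Real.norm_eq_abs] using this
        calc (Lref k s Aref j p)^2 = |Lref k s Aref j p|^2 := (sq_abs _).symm
          _ ≤ (‖Lc j‖ * ‖p‖)^2 := by
              exact pow_le_pow_left₀ (abs_nonneg _) h1 2
          _ = ‖Lc j‖^2 * ‖p‖^2 := by ring
      calc (s j.succ - s j.castSucc) * (Lref k s Aref j p)^2
          ≤ (s j.succ - s j.castSucc) * (‖Lc j‖^2 * ‖p‖^2) := by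
            exact mul_le_mul_of_nonneg_left hL hdj
        _ = (s j.succ - s j.castSucc) * ‖Lc j‖^2 * ‖p‖^2 := by ring
    calc ∑ j : Fin (k+1), (s j.succ - s j.castSucc) * (Lref k s Aref j p)^2
        ≤ (∑ j : Fin (k+1), (s j.succ - s j.castSucc) * ‖Lc j‖^2) * ‖p‖^2 := key
      _ = (∑ j : Fin (k+1), (s j.succ - s j.castSucc) * ‖Lc j‖^2) *
            ∫ x in (-1:ℝ)..1, ((p : ℝ[X]).eval x)^2 := by rw [hnorm]
      _ ≤ (1 + ∑ j : Fin (k+1), (s j.succ - s j.castSucc) * ‖Lc j‖^2) *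
            ∫ x in (-1:ℝ)..1, ((p : ℝ[X]).eval x)^2 := by nlinarith
/-- Change of variables for the elementwise `L²` norm. -/
lemma integral_scale (w : ℝ[X]) {a b : ℝ} (hab : a < b) :
    ∫ t in a..b, (w.eval t)^2
      = ((b-a)/2) * ∫ u in (-1:ℝ)..1,
          ((w.comp (C ((b-a)/2) * X + C ((a+b)/2))).eval u)^2 := by
  set c := (b-a)/2 with hc
  set d := (a+b)/2 with hd
  have hc0 : c ≠ 0 := by rw [hc]; intro h; nlinarith [hab]
  have heval : ∀ u : ℝ, (w.comp (C c * X + C d)).eval u = w.eval (c * u + d) := by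
    intro u; rw [Polynomial.eval_comp]; simp
  have hcongr : (∫ u in (-1:ℝ)..1, ((w.comp (C c * X + C d)).eval u)^2)
      = ∫ u in (-1:ℝ)..1, (fun x => (w.eval x)^2) (c * u + d) := by
    refine intervalIntegral.integral_congr fun u _ => by rw [heval]
  rw [hcongr, intervalIntegral.integral_comp_mul_add (fun x => (w.eval x)^2) hc0 d]
  have e1 : c * (-1) + d = a := by rw [hc, hd]; ring
  have e2 : c * 1 + d = b := by rw [hc, hd]; ring
  rw [e1, e2, smul_eq_mul, ← mul_assoc, mul_inv_cancel₀ hc0, one_mul]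



lemma wstar_eq (k N : ℕ) (X : Fin (N+1) → ℝ) (s Aref : Fin (k+2) → ℝ)
    (w : Fin N → Polynomial.degreeLT ℝ (k+1)) (i : Fin N) (j : Fin (k+1)) :
    wstar k N X s Aref (fun i' => (w i' : ℝ[X])) i j
      = Lref k s Aref j (affComp k ((X i.succ - X i.castSucc)/2)
          ((X i.castSucc + X i.succ)/2) (w i)) := by
  set c := (X i.succ - X i.castSucc)/2 with hc
  set d := (X i.castSucc + X i.succ)/2 with hd
  rw [Lref_apply]
  show ((w i : ℝ[X])).eval (c * s 0 + d) +
      ∑ l ∈ Finset.univ.filter (fun l : Fin (k+2) => (l : ℕ) ≤ (j : ℕ)),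
        (c * Aref l) * ((Polynomial.derivative (w i : ℝ[X])).eval (c * s l + d))
    = ((affComp k c d (w i) : Polynomial.degreeLT ℝ (k+1)) : ℝ[X]).eval (s 0) +
      ∑ l ∈ Finset.univ.filter (fun l : Fin (k+2) => (l : ℕ) ≤ (j : ℕ)),
        Aref l * ((Polynomial.derivative
          ((affComp k c d (w i) : Polynomial.degreeLT ℝ (k+1)) : ℝ[X])).eval (s l))
  rw [affComp_apply]
  congr 1
  · rw [Polynomial.eval_comp]; simp
  · refine Finset.sum_congr rfl fun l _ => ?_
    rw [Polynomial.derivative_comp]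
    simp only [derivative_add, derivative_mul, derivative_C, derivative_X, zero_mul, mul_one,
      zero_add, add_zero, Polynomial.eval_mul, Polynomial.eval_comp, Polynomial.eval_C,
      Polynomial.eval_add, Polynomial.eval_mul, Polynomial.eval_X]
    ring

lemma wstar_add (k N : ℕ) (X : Fin (N+1) → ℝ) (s Aref : Fin (k+2) → ℝ)
    (w w' : Fin N → ℝ[X]) (i : Fin N) (j : Fin (k+1)) :
    wstar k N X s Aref (fun i' => w i' + w' i') i j
      = wstar k N X s Aref w i j + wstar k N X s Aref w' i j := by
  simp only [wstar, Polynomial.eval_add, derivative_add, mul_add, Finset.sum_add_distrib]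
  ring

lemma wstar_smul (k N : ℕ) (X : Fin (N+1) → ℝ) (s Aref : Fin (k+2) → ℝ)
    (a : ℝ) (w : Fin N → ℝ[X]) (i : Fin N) (j : Fin (k+1)) :
    wstar k N X s Aref (fun i' => a • w i') i j = a * wstar k N X s Aref w i j := by
  simp only [wstar, Polynomial.smul_eq_C_mul, derivative_mul, derivative_C, zero_mul, zero_add,
    Polynomial.eval_mul, Polynomial.eval_C, mul_add, Finset.mul_sum]
  congr 1
  exact Finset.sum_congr rfl fun l _ => by ring

end T14aux


/-- The transformation `T` from `V_h` (piecewise polynomials of degree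
`≤ k`) to the piecewise constants on the control-volume sub-partition, defined by
`(Tw)_{i,j} = w*_{i,j}` with `w*_{i,0} = w(x_{i,0}⁺) + A_{i,0} w'(x_{i,0})` and
`w*_{i,j} = w*_{i,j-1} + A_{i,j} w'(x_{i,j})`, is a linear bijection, and there is a
constant `C` (independent of the mesh) with `‖Tw‖_{L²}² ≤ C ‖w‖_{L²}²` for all `w ∈ V_h`. -/
theorem T_bijective_and_bounded (k : ℕ) (hk : 1 ≤ k)
    (s : Fin (k+2) → ℝ) (hs : StrictMono s)
    (hs0 : s 0 = -1) (hsl : s (Fin.last (k+1)) = 1)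
    (Aref : Fin (k+2) → ℝ)
    (hAint : ∀ l : Fin (k+2), 1 ≤ (l : ℕ) → (l : ℕ) ≤ k → Aref l ≠ 0)
    (hAend : Aref 0 = 0 ∨ Aref (Fin.last (k+1)) = 0)
    (hexact : ∀ p : Polynomial ℝ, p.natDegree ≤ k - 1 →
      ∑ l, Aref l * p.eval (s l) = ∫ x in (-1:ℝ)..1, p.eval x) :
    ∃ C : ℝ, 0 < C ∧
      ∀ (N : ℕ), 1 ≤ N → ∀ (X : Fin (N+1) → ℝ), StrictMono X →
        (IsLinearMap ℝ (fun (w : Fin N → Polynomial.degreeLT ℝ (k+1)) =>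
            fun (i : Fin N) (j : Fin (k+1)) =>
              wstar k N X s Aref (fun i' => (w i' : Polynomial ℝ)) i j)
        ∧ Function.Bijective (fun (w : Fin N → Polynomial.degreeLT ℝ (k+1)) =>
            fun (i : Fin N) (j : Fin (k+1)) =>
              wstar k N X s Aref (fun i' => (w i' : Polynomial ℝ)) i j))
        ∧ ∀ w : Fin N → Polynomial.degreeLT ℝ (k+1),
            (∑ i : Fin N, ∑ j : Fin (k+1),
              ((X i.succ - X i.castSucc) / 2 * s j.succ
                  + (X i.castSucc + X i.succ) / 2
                - ((X i.succ - X i.castSucc) / 2 * s j.castSucc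
                  + (X i.castSucc + X i.succ) / 2)) *
                (wstar k N X s Aref (fun i' => (w i' : Polynomial ℝ)) i j)^2)
            ≤ C * ∑ i : Fin N,
                ∫ t in (X i.castSucc)..(X i.succ), ((w i : Polynomial ℝ).eval t)^2 := by
  obtain ⟨C, hC, hCb⟩ := T14aux.ref_bound k s Aref hs
  refine ⟨C, hC, ?_⟩
  intro N hN X hX
  have hci : ∀ i : Fin N, (0:ℝ) < (X i.succ - X i.castSucc)/2 := by
    intro i
    have := hX ((Fin.castSucc_lt_succ (i := i)))
    linarith
  have hM : ∀ i : Fin N, Function.Bijective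
      (T14aux.Melt k s Aref ((X i.succ - X i.castSucc)/2) ((X i.castSucc + X i.succ)/2)) :=
    fun i => T14aux.Melt_bijective hk hs hAint (ne_of_gt (hci i)) _
  refine ⟨⟨⟨?_, ?_⟩, ?_, ?_⟩, ?_⟩
  · -- additivity
    intro w w'
    funext i j
    show wstar k N X s Aref (fun i' => (((w + w') i' : Polynomial.degreeLT ℝ (k+1)) : Polynomial ℝ)) i j
      = wstar k N X s Aref (fun i' => ((w i' : Polynomial ℝ))) i j
        + wstar k N X s Aref (fun i' => ((w' i' : Polynomial ℝ))) i j
    have h1 : (fun i' => (((w + w') i' : Polynomial.degreeLT ℝ (k+1)) : Polynomial ℝ))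
        = fun i' => ((w i' : Polynomial ℝ) + (w' i' : Polynomial ℝ)) := by
      funext i'; simp
    rw [h1, T14aux.wstar_add]
  · -- homogeneity
    intro a w
    funext i j
    show wstar k N X s Aref (fun i' => (((a • w) i' : Polynomial.degreeLT ℝ (k+1)) : Polynomial ℝ)) i j
      = a • wstar k N X s Aref (fun i' => ((w i' : Polynomial ℝ))) i j
    have h1 : (fun i' => (((a • w) i' : Polynomial.degreeLT ℝ (k+1)) : Polynomial ℝ))
        = fun i' => (a • (w i' : Polynomial ℝ)) := by
      funext i'; simp
    rw [h1, T14aux.wstar_smul, smul_eq_mul]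
  · -- injectivity
    intro w w' h
    funext i
    apply (hM i).1
    funext j
    have h2 : wstar k N X s Aref (fun i' => ((w i' : Polynomial ℝ))) i j
        = wstar k N X s Aref (fun i' => ((w' i' : Polynomial ℝ))) i j :=
      congrFun (congrFun h i) j
    rw [T14aux.wstar_eq, T14aux.wstar_eq] at h2
    simpa [T14aux.Melt] using h2
  · -- surjectivity
    intro g
    choose v hv using fun i => (hM i).2 (g i)
    refine ⟨v, ?_⟩
    funext i j
    show wstar k N X s Aref (fun i' => ((v i' : Polynomial ℝ))) i j = g i j
    rw [T14aux.wstar_eq]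
    have := congrFun (hv i) j
    simpa [T14aux.Melt] using this
  · -- the bound
    intro w
    rw [Finset.mul_sum]
    refine Finset.sum_le_sum fun i _ => ?_
    set c := (X i.succ - X i.castSucc)/2 with hcdef
    set d := (X i.castSucc + X i.succ)/2 with hddef
    have hab : X i.castSucc < X i.succ := hX ((Fin.castSucc_lt_succ (i := i)))
    set p := T14aux.affComp k c d (w i) with hp
    have h1 : ∀ j : Fin (k+1),
        ((X i.succ - X i.castSucc) / 2 * s j.succ + (X i.castSucc + X i.succ) / 2
          - ((X i.succ - X i.castSucc) / 2 * s j.castSucc + (X i.castSucc + X i.succ) / 2)) *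
            (wstar k N X s Aref (fun i' => (w i' : Polynomial ℝ)) i j)^2
        = c * ((s j.succ - s j.castSucc) * (T14aux.Lref k s Aref j p)^2) := by
      intro j
      rw [T14aux.wstar_eq, ← hp]
      rw [← hcdef]
      ring
    calc ∑ j : Fin (k+1),
          ((X i.succ - X i.castSucc) / 2 * s j.succ + (X i.castSucc + X i.succ) / 2
            - ((X i.succ - X i.castSucc) / 2 * s j.castSucc + (X i.castSucc + X i.succ) / 2)) *
              (wstar k N X s Aref (fun i' => (w i' : Polynomial ℝ)) i j)^2
        = c * ∑ j : Fin (k+1), (s j.succ - s j.castSucc) * (T14aux.Lref k s Aref j p)^2 := by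
          rw [Finset.mul_sum]
          exact Finset.sum_congr rfl fun j _ => h1 j
      _ ≤ c * (C * ∫ x in (-1:ℝ)..1, ((p : Polynomial ℝ).eval x)^2) :=
          mul_le_mul_of_nonneg_left (hCb p) (le_of_lt (hci i))
      _ = C * (c * ∫ x in (-1:ℝ)..1, ((p : Polynomial ℝ).eval x)^2) := by ring
      _ = C * ∫ t in (X i.castSucc)..(X i.succ), ((w i : Polynomial ℝ).eval t)^2 := by
          rw [T14aux.integral_scale (w i : Polynomial ℝ) hab]
          rw [hp, T14aux.affComp_apply, ← hcdef, ← hddef]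
end

section
/- Define the Lagrange interpolant I_h on each element V_i of a smooth function φ by: I_h φ = I_h^- φ (interpolation at points including the right endpoint) if α > 0 at both endpoints of V_i; I_h φ = I_h^+ φ (interpolation at points including the left endpoint) if α < 0 at both endpoints; and I_h φ = I_h^± φ (interpolation at both endpoints and k−1 interior points) otherwise. Then the upwind numerical flux of I_h φ is exact at every mesh interface: \widehat{I_h φ}|_{i+1/2} = φ(x_{i+1/2}) for all i, where the upwind flux takes the left limit if α(x_{i+1/2}) > 0 and the right limit otherwise. -/
/-- Define the elementwise Lagrange interpolant `I_h φ` of a continuous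
function `φ` by: interpolation at `k+1` points including the right endpoint when `α > 0`
at both endpoints of the element (`I_h⁻`); at `k+1` points including the left endpoint
when `α < 0` at both endpoints (`I_h⁺`); and at `k+1` points including both endpoints
otherwise (`I_h^±`). Then the upwind numerical flux of `I_h φ` (left limit where
`α > 0`, right limit otherwise, with periodic identification at the last interface) is
exact at every mesh interface: it equals `φ(x_{i+1/2})`. -/
theorem interpolant_flux_exact (k N : ℕ) (hk : 1 ≤ k) (hN : 0 < N)
    (X : Fin (N+1) → ℝ) (hX : StrictMono X)
    (α φ : ℝ → ℝ)
    (hφper : φ (X 0) = φ (X (Fin.last N)))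
    (hαper : α (X 0) = α (X (Fin.last N)))
    (p : Fin N → Polynomial ℝ)
    (hdeg : ∀ i, (p i).natDegree ≤ k)
    (hinterp : ∀ i : Fin N, ∃ y : Fin (k+1) → ℝ,
      Function.Injective y ∧
      (∀ j, y j ∈ Set.Icc (X i.castSucc) (X i.succ)) ∧
      (∀ j, (p i).eval (y j) = φ (y j)) ∧
      ((0 < α (X i.castSucc) ∧ 0 < α (X i.succ)) → y (Fin.last k) = X i.succ) ∧
      ((α (X i.castSucc) < 0 ∧ α (X i.succ) < 0) → y 0 = X i.castSucc) ∧
      ((¬(0 < α (X i.castSucc) ∧ 0 < α (X i.succ)) ∧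
        ¬(α (X i.castSucc) < 0 ∧ α (X i.succ) < 0)) →
          y 0 = X i.castSucc ∧ y (Fin.last k) = X i.succ)) :
    ∀ i : Fin N,
      (if 0 < α (X i.succ) then (p i).eval (X i.succ)
       else if h : (i : ℕ) + 1 < N then (p ⟨(i : ℕ) + 1, h⟩).eval (X i.succ)
       else (p ⟨0, hN⟩).eval (X 0))
      = φ (X i.succ) := by
  have left : ∀ i : Fin N, ¬ 0 < α (X i.castSucc) →
      (p i).eval (X i.castSucc) = φ (X i.castSucc) := by
    intro i hα
    obtain ⟨y, hyinj, hymem, hyeval, hpos, hneg, hmix⟩ := hinterp i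
    by_cases hb : α (X i.castSucc) < 0 ∧ α (X i.succ) < 0
    · have h0 := hneg hb
      rw [← h0]; exact hyeval 0
    · have h0 := (hmix ⟨fun h => hα h.1, hb⟩).1
      rw [← h0]; exact hyeval 0
  have right : ∀ i : Fin N, 0 < α (X i.succ) →
      (p i).eval (X i.succ) = φ (X i.succ) := by
    intro i hα
    obtain ⟨y, hyinj, hymem, hyeval, hpos, hneg, hmix⟩ := hinterp i
    by_cases hb : 0 < α (X i.castSucc) ∧ 0 < α (X i.succ)
    · have h0 := hpos hb; rw [← h0]; exact hyeval _
    · have h0 := (hmix ⟨hb, fun h => absurd hα (not_lt.mpr h.2.le)⟩).2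
      rw [← h0]; exact hyeval _
  intro i
  by_cases hα : 0 < α (X i.succ)
  · rw [if_pos hα]; exact right i hα
  · rw [if_neg hα]
    by_cases h : (i : ℕ) + 1 < N
    · rw [dif_pos h]
      have hc : X i.succ = X (⟨(i : ℕ) + 1, h⟩ : Fin N).castSucc := by
        congr 1
      rw [hc]
      exact left _ (by rw [← hc]; exact hα)
    · rw [dif_neg h]
      have hi : (i : ℕ) + 1 = N := le_antisymm i.is_lt (not_lt.mp h)
      have hlast : i.succ = Fin.last N := by ext; simp [hi]
      have hc0 : (⟨0, hN⟩ : Fin N).castSucc = (0 : Fin (N+1)) := rfl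
      have hφ : φ (X i.succ) = φ (X 0) := by rw [hlast, hφper]
      have hα0 : ¬ 0 < α (X 0) := by
        rw [hαper, ← hlast]; exact hα
      rw [hφ]
      have := left ⟨0, hN⟩ (by rw [hc0]; exact hα0)
      rwa [hc0] at this
end
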